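/- For every sufficiently small ε > 0 there exist δ, α with 0 < α < δ < ε and n_0 ∈ ℕ such that for all n ≥ n_0 the following holds. Let γ ∈ [−α, 0.03] and let F ⊆ [n] with |F| = (1/2 − γ)n, where F = A ∪ B with |A| ≤ αn and B a sum-free subset of [(1/2−γ)n, n] ∩ [n]. If |F ∩ [n/2]| ≥ εn, then the number of maximal sum-free subsets of [n] contained in F is at most 2^{(1/4 − δ)n}. -/

import Mathlib

/-- A set of naturals is sum-free if it contains no Schur triple `x + y = z`. -/
def SumFree (S : Finset ℕ) : Prop := ∀ x ∈ S, ∀ y ∈ S, x + y ∉ S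

/-- `M` is a maximal sum-free subset of `[n] = {1, …, n}`. -/
def MaxSF (n : ℕ) (M : Finset ℕ) : Prop :=
  M ⊆ Finset.Icc 1 n ∧ SumFree M ∧
    ∀ M' : Finset ℕ, M' ⊆ Finset.Icc 1 n → SumFree M' → M ⊆ M' → M = M'

/-- The number of maximal sum-free subsets of `[n]` contained in `F`. -/
noncomputable def fmaxIn (n : ℕ) (F : Finset ℕ) : ℕ :=
  Set.ncard {M : Finset ℕ | MaxSF n M ∧ M ⊆ F}

/-!
Split a maximal sum-free set `M ⊆ A ∪ B` into `S = M ∩ A` and `T = M \ A`. As `B` is sum-free,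
`T` is a maximal independent set of the link graph of `S` (`a ~ b` iff `a + b ∈ S` or
`|a - b| ∈ S`) on the elements of `B \ A` compatible with `S`, and `S` is one of at most `2^|A|`
sets. A triangle of difference edges would give a Schur triple `|a - b| + |b - c| = |a - c|` in
`S`, so each triangle has at most one vertex outside the set `W` of vertices incident to a sum
edge. Since `B` lies above `(1/2 - γ)n`, these lie in `[(1/2 - γ)n, (1/2 + γ)n]`, so
`|W| ≤ 2γn + 1`. A Hujter–Tuza type branching argument in which the vertices of `W` weigh `1.2`
bounds the number of maximal independent sets by `2^((|B| + 0.2|W|)/2)`. Finally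
`|F ∩ [n/2]| ≥ εn` forces `γn ≳ εn`, which pushes the exponent
`|A| + (1/2 - γ)n/2 + 0.2γn + O(1)` below `(1/4 - δ)n`.
-/

open Finset

lemma le_two_rpow_of_pow_le {x a : ℝ} {m k : ℕ} (hm : m ≠ 0) (hk : a * m = k)
    (h : x ^ m ≤ 2 ^ k) : x ≤ (2 : ℝ) ^ a := by
  refine le_of_pow_le_pow_left₀ hm (by positivity) ?_
  rwa [← Real.rpow_mul_natCast zero_le_two, hk, Real.rpow_natCast]

lemma two_rpow_neg_half_le_inv {w w₀ c : ℝ} (hc : 0 < c) (hw : w₀ ≤ w)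
    (h : c ≤ (2 : ℝ) ^ (w₀ / 2)) : (2 : ℝ) ^ (-w / 2) ≤ c⁻¹ := by
  rw [neg_div, Real.rpow_neg zero_le_two]
  exact inv_anti₀ hc (h.trans (Real.rpow_le_rpow_of_exponent_le one_le_two (by linarith)))

lemma Nat.sq_le_two_pow {k : ℕ} (hk : k ≠ 3) : k ^ 2 ≤ 2 ^ k := by
  induction k with
  | zero => norm_num
  | succ m ih =>
    rcases Nat.lt_or_ge m 4 with h | h
    · interval_cases m <;> simp_all
    · have ih := ih (by omega)
      have hsucc : (m + 1) ^ 2 ≤ 2 * m ^ 2 := by nlinarith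
      rw [pow_succ 2 m]
      linarith

lemma nat_le_two_rpow_half {k : ℕ} (hk : k ≠ 3) : (k : ℝ) ≤ (2 : ℝ) ^ ((k : ℝ) / 2) :=
  le_two_rpow_of_pow_le two_ne_zero (by push_cast; ring) (by exact_mod_cast Nat.sq_le_two_pow hk)

lemma card_le_of_forall_mem_real_interval {s : Finset ℕ} {a b : ℝ} (hab : a ≤ b + 1)
    (hs : ∀ x ∈ s, a ≤ x ∧ (x : ℝ) ≤ b) : (#s : ℝ) ≤ b - a + 1 := by
  rcases s.eq_empty_or_nonempty with rfl | hne
  · simp only [card_empty, Nat.cast_zero]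
    linarith
  have hsub : s ⊆ Icc (s.min' hne) (s.max' hne) :=
    fun x hx => mem_Icc.2 ⟨min'_le _ _ hx, le_max' _ _ hx⟩
  have hcard : #s + s.min' hne ≤ s.max' hne + 1 := by
    have hIcc := (card_le_card hsub).trans_eq (Nat.card_Icc _ _)
    have hle := min'_le_max' s hne
    omega
  have : (#s : ℝ) + s.min' hne ≤ s.max' hne + 1 := by exact_mod_cast hcard
  linarith [(hs _ (min'_mem s hne)).1, (hs _ (max'_mem s hne)).2]

lemma two_le_card_inter_of_or {α : Type*} [DecidableEq α] {W : Finset α} {a b c : α}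
    (hab : a ≠ b) (hac : a ≠ c) (hbc : b ≠ c)
    (h₁ : a ∈ W ∨ b ∈ W) (h₂ : a ∈ W ∨ c ∈ W) (h₃ : b ∈ W ∨ c ∈ W) :
    2 ≤ #({a, b, c} ∩ W) := by
  by_cases ha : a ∈ W <;> by_cases hb : b ∈ W <;> by_cases hc : c ∈ W <;>
    simp_all [insert_inter_of_mem, insert_inter_of_notMem]

-- The extra weight `0.2` of elements of `W` must exceed `log₂ 3 - 3/2` (for triangles in the
-- branching) and stay below `1/2` (for the final exponent).
noncomputable def weightedCard {α : Type*} [DecidableEq α] (W D : Finset α) : ℝ :=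
  #D + 0.2 * #(D ∩ W)

section weightedCard

variable {α : Type*} [DecidableEq α] {W D V : Finset α}

lemma card_le_weightedCard : (#D : ℝ) ≤ weightedCard W D := by
  unfold weightedCard
  have : (0 : ℝ) ≤ 0.2 * #(D ∩ W) := by positivity
  linarith

lemma weightedCard_mono (h : D ⊆ V) : weightedCard W D ≤ weightedCard W V := by
  unfold weightedCard
  have h₁ : (#D : ℝ) ≤ #V := by exact_mod_cast card_le_card h
  have h₂ : (#(D ∩ W) : ℝ) ≤ #(V ∩ W) := by
    exact_mod_cast card_le_card (inter_subset_inter h (subset_refl W))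
  linarith

lemma weightedCard_sdiff (h : D ⊆ V) :
    weightedCard W (V \ D) = weightedCard W V - weightedCard W D := by
  unfold weightedCard
  have hW : D ∩ W ⊆ V ∩ W := inter_subset_inter h (subset_refl W)
  rw [← inf_eq_inter, inf_sdiff_distrib_right, inf_eq_inter, inf_eq_inter,
    card_sdiff_of_subset h, card_sdiff_of_subset hW, Nat.cast_sub (card_le_card h),
    Nat.cast_sub (card_le_card hW)]
  ring

end weightedCard

namespace SimpleGraph

variable {α : Type*} (G : SimpleGraph α)

structure IsMaximalIndepSetIn (V T : Finset α) : Prop where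
  subset : T ⊆ V
  isIndepSet : G.IsIndepSet T
  exists_adj : ∀ v ∈ V, v ∉ T → ∃ t ∈ T, G.Adj v t

open scoped Classical in
noncomputable def maximalIndepSetsIn (V : Finset α) : Finset (Finset α) :=
  V.powerset.filter (G.IsMaximalIndepSetIn V)

open scoped Classical in
noncomputable def nbhdIn (V : Finset α) (x : α) : Finset α :=
  V.filter (G.Adj x)

variable {G} {V T : Finset α} {u x y : α}

@[simp]
lemma mem_maximalIndepSetsIn : T ∈ G.maximalIndepSetsIn V ↔ G.IsMaximalIndepSetIn V T := by
  classical
  simpa [maximalIndepSetsIn] using fun h => h.subset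

@[simp]
lemma mem_nbhdIn : y ∈ G.nbhdIn V x ↔ y ∈ V ∧ G.Adj x y := by
  classical
  simp [nbhdIn]

lemma nbhdIn_subset : G.nbhdIn V x ⊆ V := fun _ h => (mem_nbhdIn.1 h).1

lemma notMem_nbhdIn_self : x ∉ G.nbhdIn V x := fun h => (mem_nbhdIn.1 h).2.ne rfl

lemma card_maximalIndepSetsIn_empty_le : #(G.maximalIndepSetsIn ∅) ≤ 1 := by
  classical
  exact (card_le_card (filter_subset _ _)).trans (by simp)

section DecidableEq

variable [DecidableEq α]

lemma IsMaximalIndepSetIn.erase {E : Finset α} (hT : G.IsMaximalIndepSetIn V T) (hx : x ∈ T)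
    (hE : Disjoint T E) :
    G.IsMaximalIndepSetIn (V \ (insert x (G.nbhdIn V x) ∪ E)) (T.erase x) where
  subset t ht := by
    obtain ⟨htx, htT⟩ := mem_erase.1 ht
    simp only [mem_sdiff, mem_union, mem_insert, mem_nbhdIn, not_or, not_and]
    exact ⟨hT.subset htT, ⟨htx, fun _ => hT.isIndepSet hx htT (Ne.symm htx)⟩,
      Finset.disjoint_left.1 hE htT⟩
  isIndepSet := hT.isIndepSet.mono (by simp)
  exists_adj v hv hvT := by
    simp only [mem_sdiff, mem_union, mem_insert, mem_nbhdIn, not_or, not_and] at hv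
    obtain ⟨hvV, ⟨hvx, hxv⟩, -⟩ := hv
    obtain ⟨t, htT, hvt⟩ := hT.exists_adj v hvV fun h => hvT (mem_erase.2 ⟨hvx, h⟩)
    refine ⟨t, mem_erase.2 ⟨?_, htT⟩, hvt⟩
    rintro rfl
    exact hxv hvV hvt.symm

lemma card_filter_maximalIndepSetsIn_le (E : Finset α) :
    #((G.maximalIndepSetsIn V).filter fun T => x ∈ T ∧ Disjoint T E) ≤
      #(G.maximalIndepSetsIn (V \ (insert x (G.nbhdIn V x) ∪ E))) := by
  refine card_le_card_of_injOn (·.erase x) (fun T hT => ?_) (fun T₁ hT₁ T₂ hT₂ h => ?_)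
  · simp only [coe_filter, Set.mem_ofPred_eq, mem_maximalIndepSetsIn, mem_coe] at hT ⊢
    exact hT.1.erase hT.2.1 hT.2.2
  · simp only [coe_filter, Set.mem_ofPred_eq] at hT₁ hT₂
    simpa [insert_erase hT₁.2.1, insert_erase hT₂.2.1] using congrArg (insert x) h

end DecidableEq

section LinearOrder

variable [LinearOrder α] {W : Finset α} {v w : α}

-- The vertices excluded in the branch where `x` is `u` or the least neighbour of `u` in the
-- independent set.
variable (G) in
noncomputable def branchSet (V : Finset α) (u x : α) : Finset α :=
  insert x (G.nbhdIn V x) ∪ (G.nbhdIn V u).filter (· < x)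

lemma IsMaximalIndepSetIn.exists_mem_disjoint (hT : G.IsMaximalIndepSetIn V T) (hu : u ∈ V) :
    ∃ x ∈ insert u (G.nbhdIn V u), x ∈ T ∧ Disjoint T ((G.nbhdIn V u).filter (· < x)) := by
  by_cases huT : u ∈ T
  · refine ⟨u, mem_insert_self _ _, huT, Finset.disjoint_left.2 fun y hyT hy => ?_⟩
    have hu := (mem_nbhdIn.1 (mem_filter.1 hy).1).2
    exact hT.isIndepSet huT hyT hu.ne hu
  · obtain ⟨t, htT, hut⟩ := hT.exists_adj u hu huT
    have hne : (T ∩ G.nbhdIn V u).Nonempty :=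
      ⟨t, mem_inter.2 ⟨htT, mem_nbhdIn.2 ⟨hT.subset htT, hut⟩⟩⟩
    obtain ⟨hminT, hminN⟩ := mem_inter.1 (min'_mem _ hne)
    refine ⟨_, mem_insert_of_mem hminN, hminT, Finset.disjoint_left.2 fun y hyT hy => ?_⟩
    obtain ⟨hyN, hy⟩ := mem_filter.1 hy
    exact (min'_le _ y (mem_inter.2 ⟨hyT, hyN⟩)).not_gt hy

lemma card_maximalIndepSetsIn_le_sum (hu : u ∈ V) :
    #(G.maximalIndepSetsIn V) ≤
      ∑ x ∈ insert u (G.nbhdIn V u), #(G.maximalIndepSetsIn (V \ G.branchSet V u x)) :=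
  calc #(G.maximalIndepSetsIn V)
      ≤ #((insert u (G.nbhdIn V u)).biUnion fun x => (G.maximalIndepSetsIn V).filter
          fun T => x ∈ T ∧ Disjoint T ((G.nbhdIn V u).filter (· < x))) := by
        refine card_le_card fun T hT => ?_
        obtain ⟨x, hx, hxT, hdisj⟩ := (mem_maximalIndepSetsIn.1 hT).exists_mem_disjoint hu
        exact mem_biUnion.2 ⟨x, hx, mem_filter.2 ⟨hT, hxT, hdisj⟩⟩
    _ ≤ _ := card_biUnion_le
    _ ≤ _ := sum_le_sum fun _ _ => card_filter_maximalIndepSetsIn_le _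

lemma branchSet_subset (hx : x ∈ V) : G.branchSet V u x ⊆ V :=
  union_subset (insert_subset hx nbhdIn_subset) ((filter_subset _ _).trans nbhdIn_subset)

lemma mem_branchSet_self : x ∈ G.branchSet V u x :=
  mem_union_left _ (mem_insert_self _ _)

lemma card_nbhdIn_add_one_le_card_branchSet : #(G.nbhdIn V x) + 1 ≤ #(G.branchSet V u x) :=
  (card_insert_of_notMem notMem_nbhdIn_self).symm.trans_le (card_le_card subset_union_left)

lemma card_nbhdIn_add_one_le_weightedCard_branchSet :
    (#(G.nbhdIn V x) : ℝ) + 1 ≤ weightedCard W (G.branchSet V u x) :=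
  le_trans (by exact_mod_cast card_nbhdIn_add_one_le_card_branchSet) card_le_weightedCard

lemma card_nbhdIn_add_two_le_card_branchSet (hv : v ∈ G.nbhdIn V u) (hvw : v < w)
    (hwv : ¬G.Adj w v) : #(G.nbhdIn V w) + 2 ≤ #(G.branchSet V u w) := by
  have hv' : v ∉ insert w (G.nbhdIn V w) := by simp [hvw.ne, hwv]
  have hsub : insert v (insert w (G.nbhdIn V w)) ⊆ G.branchSet V u w :=
    insert_subset (mem_union_right _ (mem_filter.2 ⟨hv, hvw⟩)) subset_union_left
  have := card_le_card hsub
  rwa [card_insert_of_notMem hv', card_insert_of_notMem notMem_nbhdIn_self] at this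

lemma le_weightedCard_branchSet_of_triangle
    (htri : ∀ a ∈ V, ∀ b ∈ V, ∀ c ∈ V, G.Adj a b → G.Adj b c → G.Adj a c →
      a ∈ W ∨ b ∈ W)
    (hu : u ∈ V) (hv : v ∈ V) (hw : w ∈ V) (huv : G.Adj u v) (huw : G.Adj u w)
    (hvw : G.Adj v w) (hx : x ∈ ({u, v, w} : Finset α)) :
    3.4 ≤ weightedCard W (G.branchSet V u x) := by
  have hsub : {u, v, w} ⊆ G.branchSet V u x := by
    intro y hy
    refine subset_union_left (mem_insert.2 ?_)
    by_cases hxy : y = x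
    · exact .inl hxy
    refine .inr (mem_nbhdIn.2 ⟨?_, ?_⟩)
    · simp only [mem_insert, mem_singleton] at hy
      rcases hy with rfl | rfl | rfl <;> assumption
    · simp only [mem_insert, mem_singleton] at hx hy
      rcases hx with rfl | rfl | rfl <;> rcases hy with rfl | rfl | rfl <;>
        first | exact absurd rfl hxy | assumption | exact Adj.symm ‹_›
  have hW : 2 ≤ #({u, v, w} ∩ W) :=
    two_le_card_inter_of_or huv.ne huw.ne hvw.ne (htri u hu v hv w hw huv hvw huw)
      (htri u hu w hw v hv huw hvw.symm huv) (htri v hv w hw u hu hvw huw.symm huv.symm)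
  have h3 : #({u, v, w} : Finset α) = 3 := by
    rw [card_insert_of_notMem (by simp [huv.ne, huw.ne]), card_pair hvw.ne]
  refine le_trans ?_ (weightedCard_mono hsub)
  unfold weightedCard
  rw [h3]
  have : (2 : ℝ) ≤ #({u, v, w} ∩ W) := by exact_mod_cast hW
  push_cast
  linarith

lemma sum_two_rpow_neg_weightedCard_branchSet_le_one_of_nbhdIn_eq_pair
    (htri : ∀ a ∈ V, ∀ b ∈ V, ∀ c ∈ V, G.Adj a b → G.Adj b c → G.Adj a c →
      a ∈ W ∨ b ∈ W)
    (hu : u ∈ V) (hmin : ∀ x ∈ V, 2 ≤ #(G.nbhdIn V x)) (hN : G.nbhdIn V u = {v, w})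
    (hvw : v < w) :
    ∑ x ∈ {u, v, w}, (2 : ℝ) ^ (-weightedCard W (G.branchSet V u x) / 2) ≤ 1 := by
  have hvN : v ∈ G.nbhdIn V u := by simp [hN]
  obtain ⟨hv, huv⟩ := mem_nbhdIn.1 hvN
  obtain ⟨hw, huw⟩ := mem_nbhdIn.1 (by simp [hN] : w ∈ G.nbhdIn V u)
  have hdeg : ∀ x ∈ V, 3 ≤ weightedCard W (G.branchSet V u x) := fun x hx => by
    have : (2 : ℝ) ≤ #(G.nbhdIn V x) := by exact_mod_cast hmin x hx
    linarith [card_nbhdIn_add_one_le_weightedCard_branchSet (G := G) (W := W) (V := V)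
      (u := u) (x := x)]
  rw [sum_insert (by simp [huv.ne, huw.ne]), sum_pair hvw.ne]
  by_cases hadj : G.Adj v w
  · have h := fun x (hx : x ∈ ({u, v, w} : Finset α)) =>
      two_rpow_neg_half_le_inv (c := 3) (by norm_num)
      (le_weightedCard_branchSet_of_triangle htri hu hv hw huv huw hadj hx)
      (le_two_rpow_of_pow_le (m := 10) (k := 17) (by norm_num) (by norm_num) (by norm_num))
    linarith [h u (by simp), h v (by simp), h w (by simp)]
  · have h8 : (8 / 3 : ℝ) ≤ 2 ^ ((3 : ℝ) / 2) :=
      le_two_rpow_of_pow_le (m := 2) (k := 3) (by norm_num) (by norm_num) (by norm_num)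
    have hw4 : 4 ≤ weightedCard W (G.branchSet V u w) := by
      have := card_nbhdIn_add_two_le_card_branchSet hvN hvw fun h => hadj h.symm
      have h2 : (4 : ℝ) ≤ #(G.branchSet V u w) := by
        exact_mod_cast (Nat.add_le_add_right (hmin w hw) 2).trans this
      exact h2.trans card_le_weightedCard
    have h₁ := two_rpow_neg_half_le_inv (by norm_num) (hdeg u hu) h8
    have h₂ := two_rpow_neg_half_le_inv (by norm_num) (hdeg v hv) h8
    have h₃ := two_rpow_neg_half_le_inv (c := 4) (by norm_num) hw4
      (le_two_rpow_of_pow_le (m := 1) (k := 2) (by norm_num) (by norm_num) (by norm_num))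
    linarith

/-- The `d + 1` branches at a vertex `u` of minimum degree `d` each delete at least `d + 1`
vertices, and `k ≤ 2^(k/2)` unless `k = 3`. When `d = 2`, either `u` lies in a triangle, two of
whose vertices have weight `1.2` (`3 ≤ 2^1.7`), or the branch on the larger neighbour of `u` also
deletes the smaller one (`2 · 2^(-3/2) + 2^(-2) ≤ 1`). -/
lemma sum_two_rpow_neg_weightedCard_branchSet_le_one
    (htri : ∀ a ∈ V, ∀ b ∈ V, ∀ c ∈ V, G.Adj a b → G.Adj b c → G.Adj a c →
      a ∈ W ∨ b ∈ W)
    (hu : u ∈ V) (hmin : ∀ x ∈ V, #(G.nbhdIn V u) ≤ #(G.nbhdIn V x)) :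
    ∑ x ∈ insert u (G.nbhdIn V u),
      (2 : ℝ) ^ (-weightedCard W (G.branchSet V u x) / 2) ≤ 1 := by
  by_cases hd : #(G.nbhdIn V u) = 2
  · obtain ⟨v, w, hvw, hN⟩ := card_eq_two.1 hd
    rw [hN]
    rcases hvw.lt_or_gt with hlt | hlt
    · exact sum_two_rpow_neg_weightedCard_branchSet_le_one_of_nbhdIn_eq_pair htri hu
        (fun x hx => hd ▸ hmin x hx) hN hlt
    · rw [pair_comm] at hN ⊢
      exact sum_two_rpow_neg_weightedCard_branchSet_le_one_of_nbhdIn_eq_pair htri hu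
        (fun x hx => hd ▸ hmin x hx) hN hlt
  · set d := #(G.nbhdIn V u)
    have hterm : ∀ x ∈ insert u (G.nbhdIn V u),
        (2 : ℝ) ^ (-weightedCard W (G.branchSet V u x) / 2) ≤ ((d + 1 : ℕ) : ℝ)⁻¹ := by
      intro x hx
      have hxV : x ∈ V := insert_subset hu nbhdIn_subset hx
      have : ((d + 1 : ℕ) : ℝ) ≤ #(G.nbhdIn V x) + 1 := by
        exact_mod_cast Nat.add_le_add_right (hmin x hxV) 1
      exact two_rpow_neg_half_le_inv (by positivity)
        (this.trans card_nbhdIn_add_one_le_weightedCard_branchSet)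
        (nat_le_two_rpow_half (by omega))
    calc _ ≤ ∑ _x ∈ insert u (G.nbhdIn V u), ((d + 1 : ℕ) : ℝ)⁻¹ := sum_le_sum hterm
      _ = 1 := by
        rw [sum_const, card_insert_of_notMem notMem_nbhdIn_self, nsmul_eq_mul]
        exact mul_inv_cancel₀ (by positivity)

theorem card_maximalIndepSetsIn_le (W V : Finset α)
    (htri : ∀ a ∈ V, ∀ b ∈ V, ∀ c ∈ V, G.Adj a b → G.Adj b c → G.Adj a c →
      a ∈ W ∨ b ∈ W) :
    (#(G.maximalIndepSetsIn V) : ℝ) ≤ 2 ^ (weightedCard W V / 2) := by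
  induction V using Finset.strongInduction with | H V ih =>
  rcases V.eq_empty_or_nonempty with rfl | hV
  · simpa [weightedCard] using card_maximalIndepSetsIn_empty_le (G := G)
  obtain ⟨u, hu, hmin⟩ := V.exists_min_image (fun x => #(G.nbhdIn V x)) hV
  have hbranch : ∀ x ∈ insert u (G.nbhdIn V u),
      (#(G.maximalIndepSetsIn (V \ G.branchSet V u x)) : ℝ) ≤
        2 ^ (weightedCard W V / 2) * 2 ^ (-weightedCard W (G.branchSet V u x) / 2) := by
    intro x hx
    have hsub := branchSet_subset (G := G) (u := u) (insert_subset hu nbhdIn_subset hx)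
    refine (ih _ (sdiff_ssubset hsub ⟨x, mem_branchSet_self⟩) fun a ha b hb c hc =>
      htri a (sdiff_subset ha) b (sdiff_subset hb) c (sdiff_subset hc)).trans_eq ?_
    rw [← Real.rpow_add zero_lt_two, weightedCard_sdiff hsub]
    ring_nf
  calc (#(G.maximalIndepSetsIn V) : ℝ)
      ≤ ∑ x ∈ insert u (G.nbhdIn V u),
          (#(G.maximalIndepSetsIn (V \ G.branchSet V u x)) : ℝ) := by
        exact_mod_cast card_maximalIndepSetsIn_le_sum hu
    _ ≤ ∑ x ∈ insert u (G.nbhdIn V u),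
        2 ^ (weightedCard W V / 2) * 2 ^ (-weightedCard W (G.branchSet V u x) / 2) :=
      sum_le_sum hbranch
    _ ≤ 2 ^ (weightedCard W V / 2) := by
      rw [← mul_sum]
      exact mul_le_of_le_one_right (by positivity)
        (sum_two_rpow_neg_weightedCard_branchSet_le_one htri hu hmin)

end LinearOrder

end SimpleGraph

instance : DecidablePred SumFree := fun S =>
  inferInstanceAs (Decidable (∀ x ∈ S, ∀ y ∈ S, x + y ∉ S))

def linkGraph (S : Finset ℕ) : SimpleGraph ℕ where
  Adj a b := a ≠ b ∧ (a + b ∈ S ∨ Nat.dist a b ∈ S)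
  symm := ⟨fun a b h => ⟨h.1.symm, by rw [add_comm, Nat.dist_comm]; exact h.2⟩⟩
  loopless := ⟨fun _ h => h.1 rfl⟩

lemma linkGraph_adj {S : Finset ℕ} {a b : ℕ} :
    (linkGraph S).Adj a b ↔ a ≠ b ∧ (a + b ∈ S ∨ Nat.dist a b ∈ S) :=
  Iff.rfl

def compatible (B S : Finset ℕ) : Finset ℕ := B.filter fun b => SumFree (insert b S)

def sumSupport (V S : Finset ℕ) : Finset ℕ := V.filter fun x => ∃ y ∈ V, x + y ∈ S

namespace SumFree

variable {S T M : Finset ℕ}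

lemma mono (h : SumFree T) (hST : S ⊆ T) : SumFree S :=
  fun x hx y hy hxy => h x (hST hx) y (hST hy) (hST hxy)

lemma zero_notMem (h : SumFree S) : 0 ∉ S :=
  fun h0 => h 0 h0 0 h0 h0

lemma dist_notMem (h : SumFree S) {a b : ℕ} (ha : a ∈ S) (hb : b ∈ S) :
    Nat.dist a b ∉ S := by
  intro hd
  rcases le_total a b with hab | hab
  · exact h a ha _ hd (by rwa [Nat.dist_eq_sub_of_le hab, Nat.add_sub_cancel' hab])
  · exact h b hb _ hd (by rwa [Nat.dist_eq_sub_of_le_right hab, Nat.add_sub_cancel' hab])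

lemma not_dist_triangle (h : SumFree S) (a b c : ℕ) (hab : Nat.dist a b ∈ S)
    (hbc : Nat.dist b c ∈ S) (hac : Nat.dist a c ∈ S) : False := by
  have : Nat.dist a b + Nat.dist b c = Nat.dist a c ∨
      Nat.dist a b + Nat.dist a c = Nat.dist b c ∨
      Nat.dist a c + Nat.dist b c = Nat.dist a b := by
    unfold Nat.dist; omega
  rcases this with h' | h' | h'
  · exact h _ hab _ hbc (h' ▸ hac)
  · exact h _ hab _ hac (h' ▸ hbc)
  · exact h _ hac _ hbc (h' ▸ hab)

lemma not_linkGraph_adj (hM : SumFree M) (hS : S ⊆ M) {a b : ℕ} (ha : a ∈ M) (hb : b ∈ M) :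
    ¬(linkGraph S).Adj a b := fun hadj =>
  (linkGraph_adj.1 hadj).2.elim (fun h => hM a ha b hb (hS h)) fun h => hM.dist_notMem ha hb (hS h)

lemma union (hS : SumFree S) (hT : SumFree T) (hTS : ∀ t ∈ T, SumFree (insert t S))
    (hind : (linkGraph S).IsIndepSet T) : SumFree (S ∪ T) := by
  have h0 := hS.zero_notMem
  have hdist : ∀ {a b}, a + b ∈ T → b ∈ T → a ∈ S → False := fun {a b} hab hb ha => by
    have hne : b ≠ a + b := fun h => h0 (by rwa [show a = 0 by omega] at ha)
    exact hind hb hab hne (linkGraph_adj.2 ⟨hne, .inr (by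
      rwa [Nat.dist_eq_sub_of_le le_add_self, Nat.add_sub_cancel])⟩)
  intro x hx y hy hxy
  simp only [mem_union] at hx hy hxy
  rcases hx with hx | hx <;> rcases hy with hy | hy <;> rcases hxy with hxy | hxy
  · exact hS x hx y hy hxy
  · exact hTS _ hxy x (mem_insert_of_mem hx) y (mem_insert_of_mem hy) (mem_insert_self _ _)
  · exact hTS y hy x (mem_insert_of_mem hx) y (mem_insert_self _ _) (mem_insert_of_mem hxy)
  · exact hdist hxy hy hx
  · exact hTS x hx x (mem_insert_self _ _) y (mem_insert_of_mem hy) (mem_insert_of_mem hxy)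
  · exact hdist (add_comm x y ▸ hxy) hx hy
  · by_cases hxy' : x = y
    · subst hxy'
      exact hTS x hx x (mem_insert_self _ _) x (mem_insert_self _ _) (mem_insert_of_mem hxy)
    · exact hind hx hy hxy' (linkGraph_adj.2 ⟨hxy', .inl hxy⟩)
  · exact hT x hx y hy hxy

lemma linkGraph_triangle_mem_sumSupport (h : SumFree S) (V : Finset ℕ) :
    ∀ a ∈ V, ∀ b ∈ V, ∀ c ∈ V, (linkGraph S).Adj a b → (linkGraph S).Adj b c →
      (linkGraph S).Adj a c → a ∈ sumSupport V S ∨ b ∈ sumSupport V S := by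
  intro a ha b hb c hc hab hbc hac
  by_contra! hW
  have hsum : ∀ x ∈ V, x ∉ sumSupport V S → ∀ y ∈ V, x + y ∉ S :=
    fun x hx hxW y hy hxy => hxW (mem_filter.2 ⟨hx, y, hy, hxy⟩)
  exact h.not_dist_triangle a b c
    ((linkGraph_adj.1 hab).2.resolve_left (hsum a ha hW.1 b hb))
    ((linkGraph_adj.1 hbc).2.resolve_left (hsum b hb hW.2 c hc))
    ((linkGraph_adj.1 hac).2.resolve_left (hsum a ha hW.1 c hc))

end SumFree

lemma MaxSF.isMaximalIndepSetIn {n : ℕ} {A B M : Finset ℕ} (hM : MaxSF n M)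
    (hB : B ⊆ Icc 1 n) (hBsf : SumFree B) (hMAB : M ⊆ A ∪ B) :
    (linkGraph (M ∩ A)).IsMaximalIndepSetIn (compatible (B \ A) (M ∩ A)) (M \ A) := by
  obtain ⟨hMn, hMsf, hmax⟩ := hM
  have hTB : M \ A ⊆ B \ A := fun t ht => by
    obtain ⟨htM, htA⟩ := mem_sdiff.1 ht
    exact mem_sdiff.2 ⟨(mem_union.1 (hMAB htM)).resolve_left htA, htA⟩
  have hcompat : ∀ t ∈ M \ A, SumFree (insert t (M ∩ A)) :=
    fun t ht => hMsf.mono (insert_subset (mem_sdiff.1 ht).1 inter_subset_left)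
  have hind : (linkGraph (M ∩ A)).IsIndepSet ↑(M \ A) := fun a ha b hb _ =>
    hMsf.not_linkGraph_adj inter_subset_left (mem_sdiff.1 ha).1 (mem_sdiff.1 hb).1
  refine ⟨fun t ht => mem_filter.2 ⟨hTB ht, hcompat t ht⟩, hind, ?_⟩
  intro b hb hbT
  obtain ⟨hbBA, hbS⟩ := mem_filter.1 hb
  by_contra! hno
  -- as `b` has no neighbour in `M \ A`, adding `b` to `M` keeps it sum-free
  have hsf : SumFree (M ∩ A ∪ insert b (M \ A)) := by
    refine (hMsf.mono inter_subset_left).union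
      (hBsf.mono (insert_subset (mem_sdiff.1 hbBA).1 (hTB.trans sdiff_subset)))
      (fun t ht => ?_) ?_
    · rcases mem_insert.1 ht with rfl | ht
      exacts [hbS, hcompat t ht]
    · rw [coe_insert]
      exact hind.insert fun t ht _ => ⟨hno t ht, fun h => hno t ht h.symm⟩
  have hbM := hmax _ (insert_subset (hB (mem_sdiff.1 hbBA).1) hMn)
    (hsf.mono fun x => by simp only [mem_insert, mem_union, mem_inter, mem_sdiff]; tauto)
    (subset_insert _ _)
  exact hbT (mem_sdiff.2 ⟨hbM ▸ mem_insert_self _ _, (mem_sdiff.1 hbBA).2⟩)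

lemma fmaxIn_le_sum {n : ℕ} {A B : Finset ℕ} (hB : B ⊆ Icc 1 n) (hBsf : SumFree B) :
    fmaxIn n (A ∪ B) ≤ ∑ S ∈ A.powerset.filter SumFree,
      #((linkGraph S).maximalIndepSetsIn (compatible (B \ A) S)) := by
  rw [← card_sigma, ← Set.ncard_coe_finset]
  refine Set.ncard_le_ncard_of_injOn (fun M => ⟨M ∩ A, M \ A⟩) ?_ ?_ (finite_toSet _)
  · rintro M ⟨hM, hMAB⟩
    simp only [coe_sigma, Set.mem_sigma_iff, mem_coe, mem_filter, mem_powerset,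
      SimpleGraph.mem_maximalIndepSetsIn]
    exact ⟨⟨inter_subset_right, hM.2.1.mono inter_subset_left⟩,
      hM.isMaximalIndepSetIn hB hBsf hMAB⟩
  · rintro M₁ - M₂ - h
    simp only [Sigma.mk.injEq, heq_eq_eq] at h
    rw [← sdiff_union_inter M₁ A, ← sdiff_union_inter M₂ A, h.1, h.2]

lemma weightedCard_sumSupport_compatible_le {n : ℕ} {m : ℝ} {A B S : Finset ℕ}
    (hS : S ⊆ Icc 1 n) (hBm : ∀ x ∈ B, m ≤ x) (hm : 2 * m ≤ n + 1) :
    weightedCard (sumSupport (compatible (B \ A) S) S) (compatible (B \ A) S) ≤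
      #B + 0.2 * (n - 2 * m + 1) := by
  set V := compatible (B \ A) S
  have hVB : V ⊆ B := (filter_subset _ _).trans sdiff_subset
  have hW : (#(V ∩ sumSupport V S) : ℝ) ≤ n - 2 * m + 1 := by
    have hinter : (#(V ∩ sumSupport V S) : ℝ) ≤ #(sumSupport V S) := by
      exact_mod_cast card_le_card inter_subset_right
    refine hinter.trans ((card_le_of_forall_mem_real_interval (a := m) (b := n - m)
      (by linarith) fun x hx => ?_).trans_eq (by ring))
    obtain ⟨hxV, y, hyV, hxy⟩ := mem_filter.1 hx
    have hxy : ((x + y : ℕ) : ℝ) ≤ n := by exact_mod_cast (mem_Icc.1 (hS hxy)).2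
    push_cast at hxy
    exact ⟨hBm x (hVB hxV), by linarith [hBm y (hVB hyV)]⟩
  have hV : (#V : ℝ) ≤ #B := by exact_mod_cast card_le_card hVB
  unfold weightedCard
  linarith

theorem fmaxIn_union_le {n : ℕ} {m : ℝ} {A B : Finset ℕ} (hA : A ⊆ Icc 1 n)
    (hB : B ⊆ Icc 1 n) (hBsf : SumFree B) (hBm : ∀ x ∈ B, m ≤ x) (hm : 2 * m ≤ n + 1) :
    (fmaxIn n (A ∪ B) : ℝ) ≤ 2 ^ (#A + (#B + 0.2 * (n - 2 * m + 1)) / 2) := by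
  set K : ℝ := 2 ^ ((#B + 0.2 * (n - 2 * m + 1)) / 2)
  have hterm : ∀ S ∈ A.powerset.filter SumFree,
      (#((linkGraph S).maximalIndepSetsIn (compatible (B \ A) S)) : ℝ) ≤ K := by
    intro S hS
    obtain ⟨hSA, hSsf⟩ := mem_filter.1 hS
    refine (SimpleGraph.card_maximalIndepSetsIn_le _ _
      (hSsf.linkGraph_triangle_mem_sumSupport _)).trans
      (Real.rpow_le_rpow_of_exponent_le one_le_two ?_)
    linarith [weightedCard_sumSupport_compatible_le (A := A) ((mem_powerset.1 hSA).trans hA)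
      hBm hm]
  have hcount : (#(A.powerset.filter SumFree) : ℝ) ≤ 2 ^ (#A : ℝ) := by
    rw [Real.rpow_natCast]
    exact_mod_cast (card_filter_le _ _).trans (card_powerset A).le
  calc (fmaxIn n (A ∪ B) : ℝ)
      ≤ ∑ S ∈ A.powerset.filter SumFree,
          (#((linkGraph S).maximalIndepSetsIn (compatible (B \ A) S)) : ℝ) := by
        exact_mod_cast fmaxIn_le_sum hB hBsf
    _ ≤ ∑ _S ∈ A.powerset.filter SumFree, K := sum_le_sum hterm
    _ ≤ 2 ^ (#A : ℝ) * K := by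
      rw [sum_const, nsmul_eq_mul]
      exact mul_le_mul_of_nonneg_right hcount (by positivity)
    _ = _ := (Real.rpow_add two_pos _ _).symm

lemma card_filter_two_mul_le {n : ℕ} {m : ℝ} {A B : Finset ℕ} (hBm : ∀ x ∈ B, m ≤ x)
    (hlt : #A < #((A ∪ B).filter fun x => 2 * x ≤ n)) :
    2 * m ≤ n ∧ (#((A ∪ B).filter fun x => 2 * x ≤ n) : ℝ) ≤ #A + (n / 2 - m + 1) := by
  have hsplit :
      #((A ∪ B).filter fun x => 2 * x ≤ n) ≤ #A + #(B.filter fun x => 2 * x ≤ n) := by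
    rw [filter_union]
    exact (card_union_le _ _).trans (Nat.add_le_add_right (card_filter_le _ _) _)
  obtain ⟨x, hx⟩ : (B.filter fun x => 2 * x ≤ n).Nonempty := by
    rw [nonempty_iff_ne_empty]
    rintro h
    rw [h, card_empty] at hsplit
    omega
  have hhalf : ∀ y ∈ B.filter (fun x => 2 * x ≤ n), m ≤ y ∧ (y : ℝ) ≤ n / 2 := by
    intro y hy
    obtain ⟨hyB, hy⟩ := mem_filter.1 hy
    have : ((2 * y : ℕ) : ℝ) ≤ n := by exact_mod_cast hy
    push_cast at this
    exact ⟨hBm y hyB, by linarith⟩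
  have hm : 2 * m ≤ n := by linarith [hhalf x hx]
  refine ⟨hm, ?_⟩
  have := card_le_of_forall_mem_real_interval (by linarith) hhalf
  have hsplit' : (#((A ∪ B).filter fun x => 2 * x ≤ n) : ℝ) ≤
      #A + #(B.filter fun x => 2 * x ≤ n) := by exact_mod_cast hsplit
  linarith

/-- Type (b) containers with many elements below `n/2` contain few maximal sum-free
subsets of `[n]`. -/
theorem type_b_large_lower_part :
    ∃ ε₀ : ℝ, 0 < ε₀ ∧ ∀ ε : ℝ, 0 < ε → ε ≤ ε₀ →
      ∃ δ α : ℝ, 0 < α ∧ α < δ ∧ δ < ε ∧ ∃ n₀ : ℕ, ∀ n : ℕ, n₀ ≤ n →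
        ∀ γ : ℝ, -α ≤ γ → γ ≤ 0.03 →
          ∀ F A B : Finset ℕ, F ⊆ Finset.Icc 1 n → F = A ∪ B →
            (A.card : ℝ) ≤ α * n → SumFree B →
            (∀ x ∈ B, ((1 / 2 : ℝ) - γ) * n ≤ (x : ℝ)) →
            ((F.card : ℝ) = ((1 / 2 : ℝ) - γ) * n) →
            (ε * n ≤ ((F.filter (fun x => 2 * x ≤ n)).card : ℝ)) →
            (fmaxIn n F : ℝ) ≤ (2 : ℝ) ^ (((1 / 4 : ℝ) - δ) * n) := by
  refine ⟨1, one_pos, fun ε hε _ =>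
    ⟨ε / 50, ε / 100, by positivity, by linarith, by linarith, ⌈4 / ε⌉₊, ?_⟩⟩
  rintro n hn γ - - F A B hF rfl hA hBsf hB hFcard hlow
  have hεn : 4 ≤ ε * n := by
    have hn' : (⌈4 / ε⌉₊ : ℝ) ≤ n := by exact_mod_cast hn
    have := (div_le_iff₀ hε).1 ((Nat.le_ceil (4 / ε)).trans hn')
    linarith
  have hAB : (#B : ℝ) ≤ #(A ∪ B) := by exact_mod_cast card_le_card subset_union_right
  have hAlow : (#A : ℝ) < #((A ∪ B).filter fun x => 2 * x ≤ n) := by linarith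
  obtain ⟨hm, hlow'⟩ := card_filter_two_mul_le hB (by exact_mod_cast hAlow)
  -- `hlow'` gives `γn ≥ 0.99εn - 1`, and the exponent is `n/4 + |A| - 0.3γn + 0.1`
  calc (fmaxIn n (A ∪ B) : ℝ)
      ≤ 2 ^ (#A + (#B + 0.2 * (n - 2 * ((1 / 2 - γ) * n) + 1)) / 2) :=
        fmaxIn_union_le (subset_union_left.trans hF) (subset_union_right.trans hF) hBsf hB
          (by linarith)
    _ ≤ 2 ^ ((1 / 4 - ε / 50) * n) :=
        Real.rpow_le_rpow_of_exponent_le one_le_two (by linarith)
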